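/- arXiv:2310.10767 — 4 statements merged into one kernel-verified Lean document; each statement's English description precedes it below -/
import Mathlib

section
/- Let n ≥ 1 be an integer, let φ : ℝ → ℝ be 1-Lipschitz, let W be an n×n real matrix with operator norm ‖W‖ ≤ γ for some 0 < γ < 1, and let b, b' ∈ ℝ^n. Define h^0 = 0, h^{ℓ+1} = φ.(W h^ℓ + b) and h'^0 = 0, h'^{ℓ+1} = φ.(W h'^ℓ + b') (φ applied entrywise). Assume ‖h^1‖ ≤ √n and ‖h'^1‖ ≤ √n. Then for all integers k ≥ ℓ ≥ 0, |(1/n)⟨h^ℓ, h'^ℓ⟩ − (1/n)⟨h^k, h'^k⟩| ≤ 2 γ^ℓ / (1 − γ)², where ⟨·,·⟩ and ‖·‖ are the Euclidean inner product and norm on ℝ^n. -/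
/-!
The DEQ map `v ↦ φ.(W v + b)` is a `γ`-contraction of Euclidean space, because `φ` is
1-Lipschitz entrywise and `‖W‖ ≤ γ`. Started at `0`, each iteration therefore moves by at most
`√n γʲ` at step `j` and stays in the ball of radius `√n / (1 - γ)`. Consequently `⟨hʲ, h'ʲ⟩`
changes by at most `2 n γʲ / (1 - γ)` per step, and the geometric tail from `ℓ` gives the bound.
-/

open Finset

theorem dist_le_of_dist_succ_le_geometric {X : Type*} [PseudoMetricSpace X] {g : ℕ → X}
    {C γ : ℝ} (hγ0 : 0 ≤ γ) (hγ1 : γ < 1) (hC : 0 ≤ C)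
    (hg : ∀ j, dist (g j) (g (j + 1)) ≤ C * γ ^ j) {ℓ k : ℕ} (hℓk : ℓ ≤ k) :
    dist (g ℓ) (g k) ≤ C * γ ^ ℓ / (1 - γ) :=
  calc dist (g ℓ) (g k) ≤ ∑ j ∈ Ico ℓ k, C * γ ^ j :=
        dist_le_Ico_sum_of_dist_le hℓk fun _ _ => hg _
    _ = C * ∑ j ∈ Ico ℓ k, γ ^ j := (mul_sum ..).symm
    _ ≤ C * (γ ^ ℓ / (1 - γ)) := by gcongr; exact geom_sum_Ico_le_of_lt_one hγ0 hγ1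
    _ = C * γ ^ ℓ / (1 - γ) := (mul_div_assoc ..).symm

theorem dist_succ_le_geometric_of_contracting {X : Type*} [PseudoMetricSpace X] {g : ℕ → X}
    {γ : ℝ} (hγ0 : 0 ≤ γ)
    (hg : ∀ j, dist (g (j + 1)) (g (j + 2)) ≤ γ * dist (g j) (g (j + 1))) (j : ℕ) :
    dist (g j) (g (j + 1)) ≤ dist (g 0) (g 1) * γ ^ j := by
  induction j with
  | zero => simp
  | succ j ih =>
    calc dist (g (j + 1)) (g (j + 2)) ≤ γ * dist (g j) (g (j + 1)) := hg j
      _ ≤ γ * (dist (g 0) (g 1) * γ ^ j) := by gcongr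
      _ = dist (g 0) (g 1) * γ ^ (j + 1) := by ring

theorem abs_real_inner_sub_inner_le {F : Type*} [NormedAddCommGroup F] [InnerProductSpace ℝ F]
    (x y x' y' : F) :
    |inner ℝ x y - inner ℝ x' y'| ≤ ‖x - x'‖ * ‖y‖ + ‖x'‖ * ‖y - y'‖ := by
  have : inner ℝ x y - inner ℝ x' y' = inner ℝ (x - x') y + inner ℝ x' (y - y') := by
    simp only [inner_sub_left, inner_sub_right]; ring
  rw [this]
  exact (abs_add_le _ _).trans
    (add_le_add (abs_real_inner_le_norm _ _) (abs_real_inner_le_norm _ _))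

theorem dist_inner_le_of_dist_succ_le_geometric {F : Type*} [NormedAddCommGroup F]
    [InnerProductSpace ℝ F] {x y : ℕ → F} {s γ : ℝ} (hγ0 : 0 ≤ γ) (hγ1 : γ < 1) (hs : 0 ≤ s)
    (hx0 : x 0 = 0) (hy0 : y 0 = 0)
    (hx : ∀ j, dist (x j) (x (j + 1)) ≤ s * γ ^ j) (hy : ∀ j, dist (y j) (y (j + 1)) ≤ s * γ ^ j)
    {ℓ k : ℕ} (hℓk : ℓ ≤ k) :
    dist (inner ℝ (x ℓ) (y ℓ)) (inner ℝ (x k) (y k)) ≤ 2 * s ^ 2 * γ ^ ℓ / (1 - γ) ^ 2 := by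
  have h1γ : 0 < 1 - γ := sub_pos.2 hγ1
  have norm_le {z : ℕ → F} (hz0 : z 0 = 0) (hz : ∀ j, dist (z j) (z (j + 1)) ≤ s * γ ^ j)
      (j : ℕ) : ‖z j‖ ≤ s / (1 - γ) := by
    simpa [hz0] using dist_le_of_dist_succ_le_geometric hγ0 hγ1 hs hz (Nat.zero_le j)
  have hstep (j : ℕ) : dist (inner ℝ (x j) (y j)) (inner ℝ (x (j + 1)) (y (j + 1))) ≤
      2 * s ^ 2 / (1 - γ) * γ ^ j := by
    rw [Real.dist_eq]
    calc _ ≤ ‖x j - x (j + 1)‖ * ‖y j‖ + ‖x (j + 1)‖ * ‖y j - y (j + 1)‖ :=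
          abs_real_inner_sub_inner_le ..
      _ ≤ s * γ ^ j * (s / (1 - γ)) + s / (1 - γ) * (s * γ ^ j) := by
          rw [← dist_eq_norm, ← dist_eq_norm]
          gcongr
          exacts [hx j, norm_le hy0 hy j, norm_le hx0 hx _, hy j]
      _ = 2 * s ^ 2 / (1 - γ) * γ ^ j := by ring
  calc _ ≤ 2 * s ^ 2 / (1 - γ) * γ ^ ℓ / (1 - γ) :=
        dist_le_of_dist_succ_le_geometric hγ0 hγ1 (by positivity) hstep hℓk
    _ = 2 * s ^ 2 * γ ^ ℓ / (1 - γ) ^ 2 := by field_simp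

theorem EuclideanSpace.dist_le_mul_dist_of_forall {𝕜 ι : Type*} [RCLike 𝕜] [Fintype ι]
    {x y u v : EuclideanSpace 𝕜 ι} {K : ℝ} (hK : 0 ≤ K)
    (h : ∀ i, dist (x i) (y i) ≤ K * dist (u i) (v i)) : dist x y ≤ K * dist u v := by
  rw [EuclideanSpace.dist_eq, EuclideanSpace.dist_eq, ← Real.sqrt_sq hK,
    ← Real.sqrt_mul (sq_nonneg K), mul_sum]
  gcongr with i
  rw [← mul_pow]
  gcongr
  exact h i

section DEQ

variable {ι : Type*} [Fintype ι] {φ : ℝ → ℝ} {K : NNReal}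
  {T : EuclideanSpace ℝ ι →L[ℝ] EuclideanSpace ℝ ι} {c : EuclideanSpace ℝ ι}
  {g : ℕ → EuclideanSpace ℝ ι}

theorem dist_deq_iterate_succ_le (hφ : LipschitzWith K φ)
    (hg : ∀ ℓ i, g (ℓ + 1) i = φ (T (g ℓ) i + c i)) (j : ℕ) :
    dist (g (j + 1)) (g (j + 2)) ≤ K * ‖T‖ * dist (g j) (g (j + 1)) :=
  calc dist (g (j + 1)) (g (j + 2)) ≤ K * dist (T (g j) + c) (T (g (j + 1)) + c) := by
        refine EuclideanSpace.dist_le_mul_dist_of_forall K.2 fun i => ?_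
        rw [hg, hg]
        exact hφ.dist_le_mul _ _
    _ = K * ‖T (g j - g (j + 1))‖ := by rw [dist_add_right, dist_eq_norm, map_sub]
    _ ≤ K * (‖T‖ * dist (g j) (g (j + 1))) := by
        rw [dist_eq_norm]; gcongr; exact T.le_opNorm _
    _ = K * ‖T‖ * dist (g j) (g (j + 1)) := (mul_assoc ..).symm

theorem dist_deq_iterate_le_geometric {γ : ℝ} (hφ : LipschitzWith K φ) (hγ : K * ‖T‖ ≤ γ)
    (hg0 : g 0 = 0) (hg : ∀ ℓ i, g (ℓ + 1) i = φ (T (g ℓ) i + c i)) (j : ℕ) :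
    dist (g j) (g (j + 1)) ≤ ‖g 1‖ * γ ^ j := by
  have hγ0 : 0 ≤ γ := (by positivity : (0 : ℝ) ≤ K * ‖T‖).trans hγ
  simpa [hg0] using dist_succ_le_geometric_of_contracting hγ0
    (fun j => (dist_deq_iterate_succ_le hφ hg j).trans (by gcongr)) j

end DEQ

theorem stmt2_general (n : ℕ) (φ : ℝ → ℝ) (hφ : LipschitzWith 1 φ)
    (W : Matrix (Fin n) (Fin n) ℝ) (γ : ℝ) (hγ1 : γ < 1)
    (hW : ‖Matrix.toEuclideanCLM (𝕜 := ℝ) W‖ ≤ γ)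
    (b b' : EuclideanSpace ℝ (Fin n))
    (h h' : ℕ → EuclideanSpace ℝ (Fin n))
    (h0 : h 0 = 0) (h0' : h' 0 = 0)
    (hrec : ∀ ℓ : ℕ, ∀ i : Fin n,
      h (ℓ + 1) i = φ (Matrix.toEuclideanCLM (𝕜 := ℝ) W (h ℓ) i + b i))
    (hrec' : ∀ ℓ : ℕ, ∀ i : Fin n,
      h' (ℓ + 1) i = φ (Matrix.toEuclideanCLM (𝕜 := ℝ) W (h' ℓ) i + b' i))
    (hn1 : ‖h 1‖ ≤ Real.sqrt n) (hn1' : ‖h' 1‖ ≤ Real.sqrt n) :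
    ∀ ℓ k : ℕ, ℓ ≤ k →
      |(1 / (n : ℝ)) * (inner ℝ (h ℓ) (h' ℓ) : ℝ) -
        (1 / (n : ℝ)) * (inner ℝ (h k) (h' k) : ℝ)| ≤ 2 * γ ^ ℓ / (1 - γ) ^ 2 := by
  intro ℓ k hℓk
  have hγ : ((1 : NNReal) : ℝ) * ‖Matrix.toEuclideanCLM (𝕜 := ℝ) W‖ ≤ γ := by simpa using hW
  have hγ0 : 0 ≤ γ := (norm_nonneg _).trans hW
  have hcov := dist_inner_le_of_dist_succ_le_geometric hγ0 hγ1 (Real.sqrt_nonneg n) h0 h0'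
    (fun j => (dist_deq_iterate_le_geometric hφ hγ h0 hrec j).trans (by gcongr))
    (fun j => (dist_deq_iterate_le_geometric hφ hγ h0' hrec' j).trans (by gcongr)) hℓk
  rw [Real.sq_sqrt n.cast_nonneg, Real.dist_eq] at hcov
  have hB : 0 ≤ 2 * γ ^ ℓ / (1 - γ) ^ 2 := by have := sub_pos.2 hγ1; positivity
  calc _ = 1 / (n : ℝ) * |inner ℝ (h ℓ) (h' ℓ) - inner ℝ (h k) (h' k)| := by
        rw [← mul_sub, abs_mul, abs_of_nonneg (by positivity)]
    _ ≤ 1 / n * (n * (2 * γ ^ ℓ / (1 - γ) ^ 2)) := by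
        gcongr; exact hcov.trans_eq (by ring)
    _ = n / n * (2 * γ ^ ℓ / (1 - γ) ^ 2) := by ring
    -- `n / n ≤ 1` also covers `n = 0`, where `1 / n = 0`
    _ ≤ 2 * γ ^ ℓ / (1 - γ) ^ 2 := mul_le_of_le_one_left hB (div_self_le_one _)

/-- Control of the empirical covariance `(1/n)⟨h^ℓ, h'^ℓ⟩` along two DEQ iterations with
the same weight matrix, under the normalization `‖h^1‖, ‖h'^1‖ ≤ √n`. -/
theorem stmt2 (n : ℕ) (hn : 1 ≤ n) (φ : ℝ → ℝ) (hφ : LipschitzWith 1 φ)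
    (W : Matrix (Fin n) (Fin n) ℝ) (γ : ℝ) (hγ0 : 0 < γ) (hγ1 : γ < 1)
    (hW : ‖Matrix.toEuclideanCLM (𝕜 := ℝ) W‖ ≤ γ)
    (b b' : EuclideanSpace ℝ (Fin n))
    (h h' : ℕ → EuclideanSpace ℝ (Fin n))
    (h0 : h 0 = 0) (h0' : h' 0 = 0)
    (hrec : ∀ ℓ : ℕ, ∀ i : Fin n,
      h (ℓ + 1) i = φ (Matrix.toEuclideanCLM (𝕜 := ℝ) W (h ℓ) i + b i))
    (hrec' : ∀ ℓ : ℕ, ∀ i : Fin n,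
      h' (ℓ + 1) i = φ (Matrix.toEuclideanCLM (𝕜 := ℝ) W (h' ℓ) i + b' i))
    (hn1 : ‖h 1‖ ≤ Real.sqrt n) (hn1' : ‖h' 1‖ ≤ Real.sqrt n) :
    ∀ ℓ k : ℕ, ℓ ≤ k →
      |(1 / (n : ℝ)) * (inner ℝ (h ℓ) (h' ℓ) : ℝ) -
        (1 / (n : ℝ)) * (inner ℝ (h k) (h' k) : ℝ)| ≤ 2 * γ ^ ℓ / (1 - γ) ^ 2 :=
  stmt2_general n φ hφ W γ hγ1 hW b b' h h' h0 h0' hrec hrec' hn1 hn1'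
end

section
/- Let f : ℝ → ℝ be differentiable and suppose f(x)·e^{x²} → 0 and f'(x)·e^{x²} → 0 as |x| → ∞. Fix μ ∈ ℝ and define F(σ) = ∫_ℝ f(μ + σ z) dγ(z), where γ = N(0,1) is the standard Gaussian measure on ℝ. Then for every σ > 0, F is differentiable at σ with derivative F'(σ) = (1/σ) ∫_ℝ f(μ + σ z)(z² − 1) dγ(z). -/
/-!
Substituting `x = μ + s z` turns `F(s)` into `∫ f(x) p_s(x) dx`, where `p_s` is the density of
`N(μ, s²)`. Its `s`-derivative is `p_s(x) (((x - μ)/s)² - 1)/s`, which is bounded by `2/s²`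
uniformly in `x`, so for integrable `f` one may differentiate under the integral sign; the decay
hypothesis makes `f` integrable. Undoing the substitution gives the stated formula.
-/

open MeasureTheory ProbabilityTheory Filter Real Topology
open scoped NNReal

lemma gaussianPDFReal_le (μ : ℝ) (v : ℝ≥0) (x : ℝ) :
    gaussianPDFReal μ v x ≤ (√(2 * π * v))⁻¹ := by
  refine mul_le_of_le_one_right (by positivity) (exp_le_one_iff.2 ?_)
  exact div_nonpos_of_nonpos_of_nonneg (neg_nonpos.2 (sq_nonneg _)) (by positivity)

lemma one_add_sq_mul_exp_neg_sq_div_two_le (t : ℝ) : (1 + t ^ 2) * exp (-t ^ 2 / 2) ≤ 2 := by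
  rw [neg_div, exp_neg, ← div_eq_mul_inv, div_le_iff₀ (exp_pos _)]
  linarith [add_one_le_exp (t ^ 2 / 2), sq_nonneg t]

lemma hasDerivAt_gaussianPDFReal_sq (μ x : ℝ) {σ : ℝ} (hσ : σ ≠ 0) :
    HasDerivAt (fun s => gaussianPDFReal μ (.mk (s ^ 2) (sq_nonneg s)) x)
      (gaussianPDFReal μ (.mk (σ ^ 2) (sq_nonneg σ)) x * (((x - μ) / σ) ^ 2 - 1) / σ) σ := by
  simp only [gaussianPDFReal, NNReal.coe_mk]
  have hroot : √(2 * π * σ ^ 2) ≠ 0 := by positivity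
  have hnorm : HasDerivAt (fun s => (√(2 * π * s ^ 2))⁻¹) (-(√(2 * π * σ ^ 2))⁻¹ / σ) σ := by
    refine ((((hasDerivAt_pow 2 σ).const_mul (2 * π)).sqrt (by positivity)).inv
      hroot).congr_deriv ?_
    field_simp
    rw [sq_sqrt (by positivity)]
    push_cast
    ring
  have hexp : HasDerivAt (fun s => -(x - μ) ^ 2 / (2 * s ^ 2)) ((x - μ) ^ 2 / σ ^ 3) σ := by
    refine ((hasDerivAt_const σ (-(x - μ) ^ 2)).div ((hasDerivAt_pow 2 σ).const_mul 2)
      (by positivity)).congr_deriv ?_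
    field_simp
    push_cast
    ring
  refine (hnorm.mul hexp.exp).congr_deriv ?_
  field_simp
  ring

lemma abs_deriv_gaussianPDFReal_sq_le (μ x : ℝ) {s : ℝ} (hs : s ≠ 0) :
    |gaussianPDFReal μ (.mk (s ^ 2) (sq_nonneg s)) x * (((x - μ) / s) ^ 2 - 1) / s| ≤
      2 / s ^ 2 := by
  set t := (x - μ) / s
  have hexp : -(x - μ) ^ 2 / (2 * s ^ 2) = -t ^ 2 / 2 := by
    simp only [t]; field_simp
  have hroot : |s| ≤ √(2 * π * s ^ 2) := by
    rw [← sqrt_sq_eq_abs]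
    exact sqrt_le_sqrt (le_mul_of_one_le_left (sq_nonneg s) (by linarith [two_le_pi]))
  have ht : |t ^ 2 - 1| ≤ 1 + t ^ 2 := by
    rw [abs_le]; constructor <;> nlinarith [sq_nonneg t]
  simp only [gaussianPDFReal, NNReal.coe_mk, hexp]
  rw [abs_div, abs_mul, abs_mul, abs_of_pos (exp_pos _), abs_inv, abs_of_nonneg (sqrt_nonneg _)]
  calc (√(2 * π * s ^ 2))⁻¹ * exp (-t ^ 2 / 2) * |t ^ 2 - 1| / |s|
      = (√(2 * π * s ^ 2))⁻¹ * (|t ^ 2 - 1| * exp (-t ^ 2 / 2)) / |s| := by ring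
    _ ≤ |s|⁻¹ * ((1 + t ^ 2) * exp (-t ^ 2 / 2)) / |s| := by gcongr
    _ ≤ |s|⁻¹ * 2 / |s| := by gcongr; exact one_add_sq_mul_exp_neg_sq_div_two_le t
    _ = 2 / s ^ 2 := by field_simp; rw [sq_abs]

theorem hasDerivAt_integral_gaussianPDFReal_sq_mul {f : ℝ → ℝ} (hf : Integrable f) (μ : ℝ)
    {σ : ℝ} (hσ : σ ≠ 0) :
    HasDerivAt (fun s => ∫ x, gaussianPDFReal μ (.mk (s ^ 2) (sq_nonneg s)) x * f x)
      (∫ x, gaussianPDFReal μ (.mk (σ ^ 2) (sq_nonneg σ)) x * (((x - μ) / σ) ^ 2 - 1) / σ * f x)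
      σ := by
  have hball : ∀ s ∈ Metric.ball σ (|σ| / 2), s ≠ 0 ∧ 2 / s ^ 2 ≤ 8 / σ ^ 2 := by
    intro s hs
    have hs' : |σ| / 2 < |s| := by
      rw [Metric.mem_ball, Real.dist_eq, abs_sub_comm] at hs
      linarith [abs_sub_abs_le_abs_sub σ s]
    have hs0 : s ≠ 0 := abs_pos.1 ((by positivity : (0 : ℝ) ≤ |σ| / 2).trans_lt hs')
    refine ⟨hs0, ?_⟩
    rw [div_le_div_iff₀ (by positivity) (by positivity), ← sq_abs s, ← sq_abs σ]
    nlinarith [abs_nonneg σ]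
  have hp : ∀ s : ℝ, Measurable (gaussianPDFReal μ (.mk (s ^ 2) (sq_nonneg s))) :=
    fun s => measurable_gaussianPDFReal _ _
  refine (hasDerivAt_integral_of_dominated_loc_of_deriv_le
    (F := fun s x => gaussianPDFReal μ (.mk (s ^ 2) (sq_nonneg s)) x * f x)
    (F' := fun s x =>
      gaussianPDFReal μ (.mk (s ^ 2) (sq_nonneg s)) x * (((x - μ) / s) ^ 2 - 1) / s * f x)
    (bound := fun x => 8 / σ ^ 2 * |f x|) (Metric.ball_mem_nhds σ (half_pos (abs_pos.2 hσ)))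
    ?_ ?_ ?_ ?_ ?_ ?_).2
  · exact Eventually.of_forall fun s => (hp s).aestronglyMeasurable.mul hf.aestronglyMeasurable
  · refine hf.bdd_mul (c := (√(2 * π * σ ^ 2))⁻¹) (hp σ).aestronglyMeasurable
      (ae_of_all _ fun x => ?_)
    rw [norm_of_nonneg (gaussianPDFReal_nonneg _ _ _)]
    exact gaussianPDFReal_le _ _ _
  · exact (((hp σ).mul (by fun_prop)).div_const _).aestronglyMeasurable.mul hf.aestronglyMeasurable
  · refine ae_of_all _ fun x s hs => ?_
    rw [norm_mul, norm_eq_abs, norm_eq_abs]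
    gcongr
    exact (abs_deriv_gaussianPDFReal_sq_le μ x (hball s hs).1).trans (hball s hs).2
  · exact hf.abs.const_mul _
  · exact ae_of_all _ fun x s hs =>
      (hasDerivAt_gaussianPDFReal_sq μ x (hball s hs).1).mul_const (f x)

lemma integral_gaussianReal_comp_affine (g : ℝ → ℝ) (μ : ℝ) {s : ℝ} (hs : s ≠ 0) :
    ∫ z, g (μ + s * z) ∂gaussianReal 0 1 =
      ∫ x, gaussianPDFReal μ (.mk (s ^ 2) (sq_nonneg s)) x * g x := by
  have hmap : (gaussianReal 0 1).map (fun z => μ + s * z) =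
      gaussianReal μ (.mk (s ^ 2) (sq_nonneg s)) := by
    rw [← Function.comp_def (μ + ·) (s * ·), ← Measure.map_map (by fun_prop) (by fun_prop),
      gaussianReal_map_const_mul, gaussianReal_map_const_add, mul_zero, zero_add, mul_one]
  have he : MeasurableEmbedding (fun z => μ + s * z) :=
    ((Homeomorph.mulLeft₀ s hs).trans (Homeomorph.addLeft μ)).measurableEmbedding
  rw [← he.integral_map, hmap, integral_gaussianReal_eq_integral_smul]
  · rfl
  · simpa [← NNReal.coe_eq_zero] using hs

lemma Continuous.integrable_of_tendsto_mul_exp_sq {f : ℝ → ℝ} (hf : Continuous f)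
    (h : Tendsto (fun x => f x * exp (x ^ 2)) (cocompact ℝ) (𝓝 0)) : Integrable f := by
  obtain ⟨C, hC⟩ := isBounded_iff_forall_norm_le.1
    (ZeroAtInftyContinuousMap.isBounded_range ⟨⟨_, by fun_prop⟩, h⟩)
  refine ((integrable_exp_neg_mul_sq one_pos).const_mul C).mono' hf.aestronglyMeasurable
    (ae_of_all _ fun x => ?_)
  have hx : |f x| * exp (x ^ 2) ≤ C := by
    simpa [abs_mul] using hC _ ⟨x, rfl⟩
  rw [norm_eq_abs, neg_one_mul, exp_neg, ← div_eq_mul_inv, le_div_iff₀ (exp_pos _)]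
  exact hx

theorem stmt5_general (f : ℝ → ℝ) (hf : Differentiable ℝ f)
    (hdecay : Tendsto (fun x => f x * Real.exp (x ^ 2)) (cocompact ℝ) (nhds 0))
    (μ : ℝ) :
    ∀ σ : ℝ, 0 < σ →
      HasDerivAt (fun s : ℝ => ∫ z, f (μ + s * z) ∂(gaussianReal 0 1))
        ((1 / σ) * ∫ z, f (μ + σ * z) * (z ^ 2 - 1) ∂(gaussianReal 0 1)) σ := by
  intro σ hσ
  have hderiv : (1 / σ) * ∫ z, f (μ + σ * z) * (z ^ 2 - 1) ∂gaussianReal 0 1 =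
      ∫ x, gaussianPDFReal μ (.mk (σ ^ 2) (sq_nonneg σ)) x * (((x - μ) / σ) ^ 2 - 1) / σ * f x := by
    calc (1 / σ) * ∫ z, f (μ + σ * z) * (z ^ 2 - 1) ∂gaussianReal 0 1
        = ∫ z, (fun x => (((x - μ) / σ) ^ 2 - 1) / σ * f x) (μ + σ * z) ∂gaussianReal 0 1 := by
          rw [← integral_const_mul]
          congr 1 with z
          field_simp
          ring
      _ = ∫ x, gaussianPDFReal μ (.mk (σ ^ 2) (sq_nonneg σ)) x *
            ((((x - μ) / σ) ^ 2 - 1) / σ * f x) :=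
          integral_gaussianReal_comp_affine (fun x => (((x - μ) / σ) ^ 2 - 1) / σ * f x) μ hσ.ne'
      _ = _ := by simp only [mul_div_assoc, mul_assoc]
  rw [hderiv]
  refine (hasDerivAt_integral_gaussianPDFReal_sq_mul
    (hf.continuous.integrable_of_tendsto_mul_exp_sq hdecay) μ hσ.ne').congr_of_eventuallyEq ?_
  filter_upwards [Ioi_mem_nhds hσ] with s hs
  exact integral_gaussianReal_comp_affine f μ hs.ne'

/-- Gaussian smoothing identity: derivative in the standard deviation `σ` of
`F(σ) = ∫ f(μ + σ z) dγ(z)` for the standard Gaussian measure `γ`. -/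
theorem stmt5 (f : ℝ → ℝ) (hf : Differentiable ℝ f)
    (hdecay : Tendsto (fun x => f x * Real.exp (x ^ 2)) (cocompact ℝ) (nhds 0))
    (hdecay' : Tendsto (fun x => deriv f x * Real.exp (x ^ 2)) (cocompact ℝ) (nhds 0))
    (μ : ℝ) :
    ∀ σ : ℝ, 0 < σ →
      HasDerivAt (fun s : ℝ => ∫ z, f (μ + s * z) ∂(gaussianReal 0 1))
        ((1 / σ) * ∫ z, f (μ + σ * z) * (z ^ 2 - 1) ∂(gaussianReal 0 1)) σ :=
  stmt5_general f hf hdecay μ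
end

section
/- Let φ : ℝ → ℝ be 1-Lipschitz with φ(0) = 0, let σ_w > 0, and set β := (σ_w²/2) · ∫_ℝ z² |z² − 1| dγ(z), where γ = N(0,1). Define T : [0,∞) → ℝ by T(s) = σ_w² ∫_ℝ φ(u)² dN(0, s + 1)(u). Then for all a, b ≥ 0, |T(a) − T(b)| ≤ β · |a − b|. -/
open MeasureTheory ProbabilityTheory Real

/-! After the substitution `u = √(s + 1) z`, `T s = σ_w² E_γ[φ(√(s + 1) z)²]`. For a
1-Lipschitz `φ` with `φ 0 = 0`, `|φ(x)² - φ(y)²| ≤ |x - y| (|x| + |y|)`, which at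
`x = √(a + 1) z`, `y = √(b + 1) z` equals `|a - b| z²`; integrating against `γ` gives
`|T a - T b| ≤ σ_w² |a - b|`. Finally `σ_w² ≤ β`, since
`∫ z² |z² - 1| dγ ≥ E[z⁴] - E[z²] = 3 - 1 = 2`, the Gaussian moments being read off the
derivatives of the moment generating function `exp (t² / 2)` at `0`. -/

lemma integral_pow_gaussianReal_zero_one (n : ℕ) :
    ∫ z, z ^ n ∂gaussianReal 0 1 = iteratedDeriv n (fun t ↦ exp (t ^ 2 / 2)) 0 := by
  have h := iteratedDeriv_mgf_zero (X := id) (μ := gaussianReal 0 1) (by simp) n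
  rw [mgf_id_gaussianReal] at h
  simpa using h.symm

lemma deriv_mul_exp_sq_div_two {p p' q : ℝ → ℝ} (hp : ∀ t, HasDerivAt p (p' t) t)
    (hq : ∀ t, q t = p' t + t * p t) :
    deriv (fun t ↦ p t * exp (t ^ 2 / 2)) = fun t ↦ q t * exp (t ^ 2 / 2) := by
  ext t
  have he : HasDerivAt (fun t : ℝ ↦ exp (t ^ 2 / 2)) (t * exp (t ^ 2 / 2)) t := by
    convert ((hasDerivAt_pow 2 t).div_const 2).exp using 1; field_simp; ring
  rw [hq]
  exact ((hp t).mul he).deriv.trans (by ring)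

lemma iteratedDeriv_two_exp_sq_div_two :
    iteratedDeriv 2 (fun t ↦ exp (t ^ 2 / 2)) = fun t ↦ (1 + t ^ 2) * exp (t ^ 2 / 2) := by
  have hderiv : deriv (fun t ↦ exp (t ^ 2 / 2)) = fun t ↦ t * exp (t ^ 2 / 2) := by
    simpa using deriv_mul_exp_sq_div_two (fun t ↦ hasDerivAt_const t 1) (q := id) (by simp)
  rw [iteratedDeriv_succ', iteratedDeriv_one, hderiv,
    deriv_mul_exp_sq_div_two (p := fun t ↦ t) (q := fun t ↦ 1 + t ^ 2) hasDerivAt_id'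
      (by simp [sq])]

lemma integral_sq_gaussianReal_zero_one : ∫ z, z ^ 2 ∂gaussianReal 0 1 = 1 := by
  simp [integral_pow_gaussianReal_zero_one, iteratedDeriv_two_exp_sq_div_two]

lemma integral_pow_four_gaussianReal_zero_one : ∫ z, z ^ 4 ∂gaussianReal 0 1 = 3 := by
  have hthird := deriv_mul_exp_sq_div_two (fun t ↦ (hasDerivAt_pow 2 t).const_add 1)
    (q := fun t ↦ 3 * t + t ^ 3) (by intro t; ring)
  have hfourth := deriv_mul_exp_sq_div_two (p := fun t ↦ 3 * t + t ^ 3)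
    (fun t ↦ ((hasDerivAt_id t).const_mul 3).add (hasDerivAt_pow 3 t))
    (q := fun t ↦ 3 + 6 * t ^ 2 + t ^ 4) (by intro t; simp; ring)
  rw [integral_pow_gaussianReal_zero_one, iteratedDeriv_succ, iteratedDeriv_succ,
    iteratedDeriv_two_exp_sq_div_two, hthird, hfourth]
  simp

lemma integrable_pow_gaussianReal {μ : ℝ} {v : NNReal} (n : ℕ) :
    Integrable (fun z ↦ z ^ n) (gaussianReal μ v) :=
  integrable_pow_of_mem_interior_integrableExpSet (X := id) (by simp) n

lemma two_le_integral_sq_mul_abs_sq_sub_one :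
    2 ≤ ∫ z, z ^ 2 * |z ^ 2 - 1| ∂gaussianReal 0 1 := by
  have hint : Integrable (fun z : ℝ ↦ z ^ 2 * |z ^ 2 - 1|) (gaussianReal 0 1) := by
    refine ((integrable_pow_gaussianReal 4).add (integrable_pow_gaussianReal 2)).mono'
      (by fun_prop) (Filter.Eventually.of_forall fun z ↦ ?_)
    rw [norm_mul, norm_pow, Real.norm_eq_abs, Real.norm_eq_abs, sq_abs, abs_abs, Pi.add_apply]
    have h : |z ^ 2 - 1| ≤ z ^ 2 + 1 := abs_le.mpr ⟨by nlinarith [sq_nonneg z], by linarith⟩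
    nlinarith [mul_le_mul_of_nonneg_left h (sq_nonneg z)]
  calc (2 : ℝ) = ∫ z, z ^ 4 - z ^ 2 ∂gaussianReal 0 1 := by
        rw [integral_sub (integrable_pow_gaussianReal 4) (integrable_pow_gaussianReal 2),
          integral_pow_four_gaussianReal_zero_one, integral_sq_gaussianReal_zero_one]
        norm_num
    _ ≤ ∫ z, z ^ 2 * |z ^ 2 - 1| ∂gaussianReal 0 1 :=
        integral_mono ((integrable_pow_gaussianReal 4).sub (integrable_pow_gaussianReal 2)) hint
          fun z ↦ by nlinarith [le_abs_self (z ^ 2 - 1), sq_nonneg z]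

lemma gaussianReal_map_sqrt_mul {v : ℝ} (hv : 0 ≤ v) :
    (gaussianReal 0 1).map (√v * ·) = gaussianReal 0 v.toNNReal := by
  rw [gaussianReal_map_const_mul, mul_zero, mul_one]
  congr
  rw [Real.sq_sqrt hv, max_eq_left hv]

lemma integral_gaussianReal_eq_integral_sqrt_mul {v : ℝ} (hv : 0 ≤ v) {g : ℝ → ℝ}
    (hg : Measurable g) :
    ∫ u, g u ∂gaussianReal 0 v.toNNReal = ∫ z, g (√v * z) ∂gaussianReal 0 1 := by
  rw [← gaussianReal_map_sqrt_mul hv, integral_map (by fun_prop) hg.aestronglyMeasurable]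

lemma LipschitzWith.abs_sq_sub_sq_le {φ : ℝ → ℝ} {K : NNReal} (hφ : LipschitzWith K φ)
    (hφ0 : φ 0 = 0) (x y : ℝ) :
    |φ x ^ 2 - φ y ^ 2| ≤ K ^ 2 * (|x - y| * (|x| + |y|)) := by
  have hdiff : |φ x - φ y| ≤ K * |x - y| := by
    simpa [Real.dist_eq] using hφ.dist_le_mul x y
  have habs : ∀ u, |φ u| ≤ K * |u| := fun u ↦ by
    simpa [Real.dist_eq, hφ0] using hφ.dist_le_mul u 0
  have hsum : |φ x + φ y| ≤ K * (|x| + |y|) :=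
    (abs_add_le _ _).trans (by rw [mul_add]; exact add_le_add (habs x) (habs y))
  calc |φ x ^ 2 - φ y ^ 2| = |φ x - φ y| * |φ x + φ y| := by rw [← abs_mul]; ring_nf
    _ ≤ (K * |x - y|) * (K * (|x| + |y|)) :=
        mul_le_mul hdiff hsum (abs_nonneg _) (by positivity)
    _ = K ^ 2 * (|x - y| * (|x| + |y|)) := by ring

lemma abs_integral_sq_comp_mul_sub_le {φ : ℝ → ℝ} {K : NNReal} (hφ : LipschitzWith K φ)
    (hφ0 : φ 0 = 0) {μ : Measure ℝ} (hμ : Integrable (fun z ↦ z ^ 2) μ) {c d : ℝ}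
    (hc : 0 ≤ c) (hd : 0 ≤ d) :
    |∫ z, φ (c * z) ^ 2 ∂μ - ∫ z, φ (d * z) ^ 2 ∂μ| ≤
      K ^ 2 * |c ^ 2 - d ^ 2| * ∫ z, z ^ 2 ∂μ := by
  have hpt : ∀ c' d', 0 ≤ c' → 0 ≤ d' → ∀ z,
      |φ (c' * z) ^ 2 - φ (d' * z) ^ 2| ≤ K ^ 2 * |c' ^ 2 - d' ^ 2| * z ^ 2 := by
    intro c' d' hc' hd' z
    refine (hφ.abs_sq_sub_sq_le hφ0 _ _).trans (le_of_eq ?_)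
    rw [← sub_mul, abs_mul, abs_mul, abs_mul, abs_of_nonneg hc', abs_of_nonneg hd',
      ← sq_abs z, sq_sub_sq, abs_mul, abs_of_nonneg (add_nonneg hc' hd')]
    ring
  have hint : ∀ c', 0 ≤ c' → Integrable (fun z ↦ φ (c' * z) ^ 2) μ := fun c' hc' ↦
    (hμ.const_mul (K ^ 2 * |c' ^ 2 - 0 ^ 2|)).mono'
      ((hφ.continuous.comp (continuous_const_mul c')).pow 2).aestronglyMeasurable
      (Filter.Eventually.of_forall fun z ↦ by
        simpa [hφ0] using hpt c' 0 hc' le_rfl z)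
  rw [← integral_sub (hint c hc) (hint d hd), ← integral_const_mul]
  exact (abs_integral_le_integral_abs).trans
    (integral_mono ((hint c hc).sub (hint d hd)).abs (hμ.const_mul _) (hpt c d hc hd))

theorem stmt10_general (φ : ℝ → ℝ) (hφ : LipschitzWith 1 φ) (hφ0 : φ 0 = 0)
    (σw : ℝ)
    (β : ℝ) (hβ : β = σw ^ 2 / 2 * ∫ z, z ^ 2 * |z ^ 2 - 1| ∂(gaussianReal 0 1))
    (T : ℝ → ℝ)
    (hT : ∀ s : ℝ, T s = σw ^ 2 * ∫ u, (φ u) ^ 2 ∂(gaussianReal 0 (Real.toNNReal (s + 1)))) :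
    ∀ a b : ℝ, 0 ≤ a → 0 ≤ b → |T a - T b| ≤ β * |a - b| := by
  intro a b ha hb
  have hφ2 : Measurable fun u ↦ φ u ^ 2 := (hφ.continuous.pow 2).measurable
  have hdiff := abs_integral_sq_comp_mul_sub_le hφ hφ0
    (integrable_pow_gaussianReal (μ := 0) (v := 1) 2) (sqrt_nonneg (a + 1)) (sqrt_nonneg (b + 1))
  rw [sq_sqrt (by linarith), sq_sqrt (by linarith), integral_sq_gaussianReal_zero_one] at hdiff
  rw [hT, hT, integral_gaussianReal_eq_integral_sqrt_mul (by linarith) hφ2,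
    integral_gaussianReal_eq_integral_sqrt_mul (by linarith) hφ2, ← mul_sub, abs_mul,
    abs_of_nonneg (sq_nonneg σw)]
  calc _ ≤ σw ^ 2 * |a - b| := mul_le_mul_of_nonneg_left (by simpa using hdiff) (sq_nonneg σw)
    _ ≤ β * |a - b| := by
        rw [hβ]
        gcongr
        nlinarith [two_le_integral_sq_mul_abs_sq_sub_one, sq_nonneg σw]

/-- The one-step variance map `T(s) = σ_w² ∫ φ(u)² dN(0, s+1)(u)` of the DEQ covariance
recursion is `β`-Lipschitz on `[0, ∞)`, where
`β = (σ_w²/2) ∫ z² |z² − 1| dγ(z)`. -/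
theorem stmt10 (φ : ℝ → ℝ) (hφ : LipschitzWith 1 φ) (hφ0 : φ 0 = 0)
    (σw : ℝ) (hσw : 0 < σw)
    (β : ℝ) (hβ : β = σw ^ 2 / 2 * ∫ z, z ^ 2 * |z ^ 2 - 1| ∂(gaussianReal 0 1))
    (T : ℝ → ℝ)
    (hT : ∀ s : ℝ, T s = σw ^ 2 * ∫ u, (φ u) ^ 2 ∂(gaussianReal 0 (Real.toNNReal (s + 1)))) :
    ∀ a b : ℝ, 0 ≤ a → 0 ≤ b → |T a - T b| ≤ β * |a - b| :=
  stmt10_general φ hφ hφ0 σw β hβ T hT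
end

section
/- Let N ≥ 1, let A be an N×N real symmetric positive definite matrix with positive semidefinite square root S (so S is symmetric positive semidefinite and S² = A), and let φ : ℝ → ℝ be a nonconstant Lipschitz function. Define the N×N matrix B by B_{ij} = ∫_{ℝ^N} φ((S g)_i) · φ((S g)_j) dγ^{⊗N}(g), where γ^{⊗N} is the standard Gaussian measure on ℝ^N (the product of N copies of N(0,1)). Then B is symmetric positive definite: for every nonzero c ∈ ℝ^N, Σ_{i,j} c_i c_j B_{ij} > 0. -/
/-!
`B` is the Gram matrix in `L²(γ^{⊗N})` of the functions `fᵢ g = φ ((S g)ᵢ)`, which are square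
integrable because a Lipschitz `φ` grows at most linearly. A Gram matrix is positive definite once
its vectors are linearly independent. A continuous function vanishing almost everywhere for a
measure charging every open set vanishes identically, and `S` is invertible, so a relation
`∑ cᵢ fᵢ = 0` in `L²` gives `∑ cᵢ φ (uᵢ) = 0` for every `u`; moving one coordinate of `u` between
two points where `φ` differs shows `c = 0`.
-/

open MeasureTheory ProbabilityTheory Matrix

open scoped ENNReal NNReal InnerProductSpace

lemma MeasureTheory.Measure.isOpenPosMeasure_withDensity {X : Type*} [TopologicalSpace X]
    [MeasurableSpace X] {μ : Measure X} [μ.IsOpenPosMeasure] {f : X → ℝ≥0∞}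
    (hf_meas : AEMeasurable f μ) (hf : ∀ x, f x ≠ 0) : (μ.withDensity f).IsOpenPosMeasure := by
  refine ⟨fun s hs hne => ?_⟩
  rw [Ne, withDensity_apply_eq_zero' hf_meas]
  simpa [hf] using hs.measure_ne_zero μ hne

lemma ProbabilityTheory.isOpenPosMeasure_gaussianReal (m : ℝ) {v : ℝ≥0} (hv : v ≠ 0) :
    (gaussianReal m v).IsOpenPosMeasure := by
  rw [gaussianReal_of_var_ne_zero m hv]
  exact volume.isOpenPosMeasure_withDensity (measurable_gaussianPDF m v).aemeasurable
    fun x => (gaussianPDF_pos m hv x).ne'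

lemma LipschitzWith.comp_memLp_of_isFiniteMeasure {α E F : Type*} [MeasurableSpace α]
    {μ : Measure α} [IsFiniteMeasure μ] [NormedAddCommGroup E] [NormedAddCommGroup F]
    {p : ℝ≥0∞} {K : ℝ≥0} {g : E → F} (hg : LipschitzWith K g) {f : α → E} (hf : MemLp f p μ) :
    MemLp (g ∘ f) p μ := by
  have h := ((hg.sub (LipschitzWith.const (g 0))).comp_memLp (sub_self _) hf).add
    (memLp_const (g 0))
  convert h using 1
  ext x
  simp

lemma MeasureTheory.memLp_mulVec_apply_pi {ι m : Type*} [Fintype ι] {μ : ι → Measure ℝ}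
    [∀ k, IsProbabilityMeasure (μ k)] {p : ℝ≥0∞} (hμ : ∀ k, MemLp id p (μ k))
    (M : Matrix m ι ℝ) (i : m) : MemLp (fun g => (M *ᵥ g) i) p (Measure.pi μ) := by
  simp only [mulVec, dotProduct]
  exact memLp_finsetSum (f := fun k (g : ι → ℝ) => M i k * g k) _ fun k _ =>
    ((hμ k).comp_measurePreserving (measurePreserving_eval μ k)).const_mul (M i k)

lemma MeasureTheory.integral_mul_eq_inner_toLp {α : Type*} [MeasurableSpace α] {μ : Measure α}
    {f g : α → ℝ} (hf : MemLp f 2 μ) (hg : MemLp g 2 μ) :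
    ∫ x, f x * g x ∂μ = ⟪hf.toLp f, hg.toLp g⟫_ℝ := by
  rw [L2.inner_def]
  refine integral_congr_ae ?_
  filter_upwards [hf.coeFn_toLp, hg.coeFn_toLp] with x hfx hgx
  simp [hfx, hgx, mul_comm]

lemma MeasureTheory.linearIndependent_toLp_of_continuous {ι α 𝕜 E : Type*} [Fintype ι]
    [TopologicalSpace α] [MeasurableSpace α] [OpensMeasurableSpace α] {μ : Measure α}
    [μ.IsOpenPosMeasure] [NormedField 𝕜] [NormedAddCommGroup E] [NormedSpace 𝕜 E] {p : ℝ≥0∞}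
    [Fact (1 ≤ p)] {f : ι → α → E} (hf : ∀ i, MemLp (f i) p μ) (hcont : ∀ i, Continuous (f i))
    (hli : LinearIndependent 𝕜 f) : LinearIndependent 𝕜 fun i => (hf i).toLp (f i) := by
  rw [Fintype.linearIndependent_iff] at hli ⊢
  intro c hc
  refine hli c ?_
  have hsmul : ∀ᵐ x ∂μ, ∀ i, (c i • (hf i).toLp (f i) : Lp E p μ) x = c i • f i x :=
    ae_all_iff.mpr fun i => by
      filter_upwards [Lp.coeFn_smul (c i) ((hf i).toLp (f i)), (hf i).coeFn_toLp] with x h1 h2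
      rw [h1, Pi.smul_apply, h2]
  have hae : (fun x => ∑ i, c i • f i x) =ᵐ[μ] fun _ => 0 := by
    filter_upwards [Lp.coeFn_finsetSum Finset.univ fun i => c i • (hf i).toLp (f i), hsmul,
      hc ▸ Lp.coeFn_zero E p μ] with x hsum hsmul hzero
    simp_all
  have hcont_sum : Continuous fun x => ∑ i, c i • f i x :=
    continuous_finsetSum _ fun i _ => (hcont i).const_smul (c i)
  funext x
  simpa using congrFun ((hcont_sum.ae_eq_iff_eq μ continuous_const).mp hae) x

lemma linearIndependent_comp_eval {ι α R : Type*} [Fintype ι] [Ring R] [NoZeroDivisors R]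
    {φ : α → R} (hφ : ∃ a b, φ a ≠ φ b) : LinearIndependent R fun i (u : ι → α) => φ (u i) := by
  classical
  obtain ⟨a, b, hab⟩ := hφ
  rw [Fintype.linearIndependent_iff]
  intro c hc i
  have hsum (u : ι → α) : ∑ j, c j * φ (u j) = 0 := by simpa using congrFun hc u
  have hdiff : c i * (φ a - φ b) = 0 := calc
    c i * (φ a - φ b) = ∑ j, c j * φ (Function.update (fun _ => b) i a j) - ∑ j, c j * φ b := by
      rw [← Finset.sum_sub_distrib, Finset.sum_eq_single i (fun j _ hj => by simp [hj]) (by simp),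
        Function.update_self, mul_sub]
    _ = 0 := by rw [hsum, hsum fun _ => b, sub_zero]
  exact (mul_eq_zero.mp hdiff).resolve_right (sub_ne_zero.mpr hab)

theorem stmt13_general (N : ℕ)
    (A S : Matrix (Fin N) (Fin N) ℝ)
    (hA : A.PosDef) (hSA : S * S = A)
    (φ : ℝ → ℝ) (K : NNReal) (hφ : LipschitzWith K φ)
    (hnc : ∃ x y : ℝ, φ x ≠ φ y)
    (B : Matrix (Fin N) (Fin N) ℝ)
    (hB : ∀ i j, B i j = ∫ g : Fin N → ℝ,
        φ (S.mulVec g i) * φ (S.mulVec g j) ∂(Measure.pi fun _ => gaussianReal 0 1)) :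
    B.PosDef := by
  have := isOpenPosMeasure_gaussianReal 0 one_ne_zero
  let f : Fin N → (Fin N → ℝ) → ℝ := fun i g => φ ((S *ᵥ g) i)
  have hf (i) : MemLp (f i) 2 (Measure.pi fun _ => gaussianReal 0 1) :=
    hφ.comp_memLp_of_isFiniteMeasure
      (memLp_mulVec_apply_pi (fun _ => memLp_id_gaussianReal' 2 ENNReal.ofNat_ne_top) S i)
  have hcont (i) : Continuous (f i) := hφ.continuous.comp (by fun_prop)
  have hS : Function.Surjective S.mulVec :=
    mulVec_surjective_iff_isUnit.mpr (isUnit_of_mul_isUnit_left (hSA ▸ hA.isUnit))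
  have hli : LinearIndependent ℝ f :=
    (linearIndependent_comp_eval hnc).map' (LinearMap.funLeft ℝ ℝ S.mulVec)
      (LinearMap.ker_eq_bot.mpr (LinearMap.funLeft_injective_of_surjective _ _ _ hS))
  have hB_gram : B = gram ℝ fun i => (hf i).toLp (f i) := by
    ext i j
    rw [hB, gram_apply, integral_mul_eq_inner_toLp]
  rw [hB_gram]
  exact posDef_gram_of_linearIndependent (linearIndependent_toLp_of_continuous hf hcont hli)

/-- One layer of the NNGP covariance recursion preserves strict positive definiteness:
if `A = S²` is positive definite with positive semidefinite square root `S` and `φ` is a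
nonconstant Lipschitz function, then `B_{ij} = E[φ((Sg)_i) φ((Sg)_j)]`, with `g` a standard
Gaussian vector, is positive definite. -/
theorem stmt13 (N : ℕ) (hN : 1 ≤ N)
    (A S : Matrix (Fin N) (Fin N) ℝ)
    (hA : A.PosDef) (hS : S.PosSemidef) (hSA : S * S = A)
    (φ : ℝ → ℝ) (K : NNReal) (hφ : LipschitzWith K φ)
    (hnc : ∃ x y : ℝ, φ x ≠ φ y)
    (B : Matrix (Fin N) (Fin N) ℝ)
    (hB : ∀ i j, B i j = ∫ g : Fin N → ℝ,
        φ (S.mulVec g i) * φ (S.mulVec g j) ∂(Measure.pi fun _ => gaussianReal 0 1)) :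
    B.PosDef :=
  stmt13_general N A S hA hSA φ K hφ hnc B hB
end
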